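/- For every t with 1/4 ≤ t ≤ 3/4, one has −(2t−1)^4/12 − (2t−1)^6/30 − 2^{17}(2t−1)^8/8! ≤ J(t) − log 2 ≤ −(2t−1)^4/12 − (2t−1)^6/30. -/

import Mathlib

/-!
With `s = 2t - 1`, the identity `I = binEntropy` and the logarithm series give
`log 2 - I((1 + s)/2) = ∑_{k ≥ 1} s^(2k) / (2k(2k - 1))`, so
`log 2 - J(t) = s⁴/12 + s⁶/30 + ∑_{k ≥ 4} s^(2k) / (2k(2k - 1))`.
The tail is nonnegative, and for `s² ≤ 1/4` it is dominated by the geometric series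
`s⁸/56 · ∑ s^(2n) ≤ s⁸/42`, far below `2¹⁷ s⁸/8!`.
-/

/-- The entropy-like function `I(t) = (t-1) log(1-t) - t log t`. -/
noncomputable def Ifun (t : ℝ) : ℝ := (t - 1) * Real.log (1 - t) - t * Real.log t

/-- `J(t) = I(t) + (2t-1)²/2`. -/
noncomputable def Jfun (t : ℝ) : ℝ := Ifun t + (2 * t - 1) ^ 2 / 2

open Real Finset

theorem Ifun_eq_binEntropy : Ifun = binEntropy := by
  ext t
  rw [Ifun, binEntropy, log_inv, log_inv]
  ring

theorem hasSum_mul_log_one_add_add_mul_log_one_sub {x : ℝ} (hx : |x| < 1) :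
    HasSum (fun k : ℕ => x ^ (2 * (k + 1)) / ((k + 1) * (2 * k + 1)))
      ((1 + x) * log (1 + x) + (1 - x) * log (1 - x)) := by
  have hx2 : |x ^ 2| < 1 := by
    rw [abs_pow, sq_lt_one_iff₀ (abs_nonneg x)]; exact hx
  obtain ⟨hx₁, hx₂⟩ := abs_lt.1 hx
  have hlog : log (1 - x ^ 2) = log (1 + x) + log (1 - x) := by
    rw [← log_mul (by linarith) (by linarith)]; ring_nf
  have hval : (1 + x) * log (1 + x) + (1 - x) * log (1 - x)
      = x * (log (1 + x) - log (1 - x)) - -log (1 - x ^ 2) := by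
    rw [hlog]; ring
  rw [hval]
  refine (((hasSum_log_sub_log_of_abs_lt_one hx).mul_left x).sub
    (hasSum_pow_div_log_of_abs_lt_one hx2)).congr_fun fun k => ?_
  field_simp
  ring

theorem hasSum_log_two_sub_binEntropy {x : ℝ} (hx : |x| < 1) :
    HasSum (fun k : ℕ => x ^ (2 * (k + 1)) / (2 * (k + 1) * (2 * k + 1)))
      (log 2 - binEntropy ((1 + x) / 2)) := by
  obtain ⟨hx₁, hx₂⟩ := abs_lt.1 hx
  have hval : log 2 - binEntropy ((1 + x) / 2)
      = ((1 + x) * log (1 + x) + (1 - x) * log (1 - x)) / 2 := by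
    have h₁ : 1 - (1 + x) / 2 = (1 - x) / 2 := by ring
    rw [binEntropy, h₁, inv_div, inv_div, log_div two_ne_zero (by linarith),
      log_div two_ne_zero (by linarith)]
    ring
  rw [hval]
  refine ((hasSum_mul_log_one_add_add_mul_log_one_sub hx).div_const 2).congr_fun fun k => ?_
  field_simp

theorem hasSum_log_two_sub_binEntropy_sub_taylor {x : ℝ} (hx : |x| < 1) :
    HasSum (fun k : ℕ => x ^ (2 * (k + 4)) / (2 * (k + 4) * (2 * k + 7)))
      (log 2 - binEntropy ((1 + x) / 2) - (x ^ 2 / 2 + x ^ 4 / 12 + x ^ 6 / 30)) := by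
  have h := (hasSum_nat_add_iff' 3).2 (hasSum_log_two_sub_binEntropy hx)
  norm_num only [sum_range_succ, sum_range_zero, zero_add] at h
  refine h.congr_fun fun k => ?_
  push_cast
  field_simp
  ring

theorem taylor_le_log_two_sub_binEntropy {x : ℝ} (hx : |x| < 1) :
    x ^ 2 / 2 + x ^ 4 / 12 + x ^ 6 / 30 ≤ log 2 - binEntropy ((1 + x) / 2) :=
  sub_nonneg.1 <| (hasSum_log_two_sub_binEntropy_sub_taylor hx).nonneg fun _ => by
    rw [pow_mul]; positivity

theorem log_two_sub_binEntropy_le_taylor {x : ℝ} (hx : x ^ 2 ≤ 1 / 4) :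
    log 2 - binEntropy ((1 + x) / 2) ≤ x ^ 2 / 2 + x ^ 4 / 12 + x ^ 6 / 30 + x ^ 8 / 42 := by
  have hx₁ : |x| < 1 := by
    rw [← sq_lt_one_iff₀ (abs_nonneg x), sq_abs]; linarith
  have hterm (k : ℕ) :
      x ^ (2 * (k + 4)) / (2 * (k + 4) * (2 * k + 7)) ≤ x ^ 8 / 56 * (x ^ 2) ^ k := by
    have hk : (56 : ℝ) ≤ 2 * (k + 4) * (2 * k + 7) := by nlinarith [k.cast_nonneg (α := ℝ)]
    calc x ^ (2 * (k + 4)) / (2 * (k + 4) * (2 * k + 7))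
        = x ^ 8 * (x ^ 2) ^ k / (2 * (k + 4) * (2 * k + 7)) := by ring
      _ ≤ x ^ 8 * (x ^ 2) ^ k / 56 := div_le_div_of_nonneg_left (by positivity) (by norm_num) hk
      _ = x ^ 8 / 56 * (x ^ 2) ^ k := by ring
  have hgeom := (hasSum_geometric_of_lt_one (sq_nonneg x) (by linarith)).mul_left (x ^ 8 / 56)
  have htail := hasSum_le hterm (hasSum_log_two_sub_binEntropy_sub_taylor hx₁) hgeom
  have hgeom_le : x ^ 8 / 56 * (1 - x ^ 2)⁻¹ ≤ x ^ 8 / 42 := by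
    have h8 : 0 ≤ x ^ 8 := by positivity
    rw [← div_eq_mul_inv, div_le_iff₀ (by linarith)]
    nlinarith [mul_nonneg h8 (sub_nonneg.2 hx)]
  linarith

theorem Jfun_taylor_bounds :
    ∀ t : ℝ, 1 / 4 ≤ t → t ≤ 3 / 4 →
      -(2 * t - 1) ^ 4 / 12 - (2 * t - 1) ^ 6 / 30
          - 2 ^ 17 * (2 * t - 1) ^ 8 / (Nat.factorial 8 : ℝ) ≤ Jfun t - Real.log 2 ∧
      Jfun t - Real.log 2 ≤ -(2 * t - 1) ^ 4 / 12 - (2 * t - 1) ^ 6 / 30 := by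
  intro t ht₁ ht₂
  obtain ⟨s, rfl⟩ : ∃ s : ℝ, t = (1 + s) / 2 := ⟨2 * t - 1, by ring⟩
  have hs : 2 * ((1 + s) / 2) - 1 = s := by ring
  simp only [Jfun, Ifun_eq_binEntropy, hs]
  have hs_sq : s ^ 2 ≤ 1 / 4 := by nlinarith
  have hs_abs : |s| < 1 := by rw [abs_lt]; constructor <;> linarith
  have hlower := taylor_le_log_two_sub_binEntropy hs_abs
  have hupper := log_two_sub_binEntropy_le_taylor hs_sq
  have hconst : s ^ 8 / 42 ≤ 2 ^ 17 * s ^ 8 / (Nat.factorial 8 : ℝ) := by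
    rw [show (Nat.factorial 8 : ℝ) = 40320 by norm_num [Nat.factorial]]
    nlinarith [pow_two_nonneg (s ^ 4)]
  constructor <;> linarith
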